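/- arXiv:1501.00961 — 2 statements merged into one kernel-verified Lean document; each statement's English description precedes it below -/
import Mathlib

section
/- Let a = (a_n) be a strictly decreasing sequence of positive reals converging to 0, and let b = (b_ω)_{ω∈Ω*} be a gauge with b̄_n = sup_{|ω|=n} b_ω. If Σ_{k≥n} b̄_k = o(a_n), then the Hilbert brick H_b is a compact subset of the Banach space C^a(Ω). -/
open Filter Set MeasureTheory

abbrev Omega : Type := ℕ → Bool

def shift (x : Omega) : Omega := fun n => x (n + 1)

open Classical in
/-- The metric `d_a` on `Ω`: distance `a m` where `m` is the first disagreement. -/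
noncomputable def dA (a : ℕ → ℝ) (x y : Omega) : ℝ :=
  if h : x = y then 0 else a (Nat.find (Function.ne_iff.mp h))

/-- A strictly decreasing sequence of positive reals converging to zero. -/
structure GoodSeq where
  a : ℕ → ℝ
  pos : ∀ n, 0 < a n
  anti : StrictAnti a
  lim : Tendsto a atTop (nhds 0)

/-- Membership in `C^a(Ω)`: Lipschitz with respect to the metric `d_a`. -/
def MemCa (a : ℕ → ℝ) (f : Omega → ℝ) : Prop :=
  ∃ K : ℝ, ∀ x y, |f x - f y| ≤ K * dA a x y

def lipSet (a : ℕ → ℝ) (f : Omega → ℝ) : Set ℝ :=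
  {K | 0 ≤ K ∧ ∀ x y, |f x - f y| ≤ K * dA a x y}

/-- The least Lipschitz constant w.r.t. `d_a`. -/
noncomputable def lipA (a : ℕ → ℝ) (f : Omega → ℝ) : ℝ := sInf (lipSet a f)

/-- The norm of `C^a(Ω)`: sup norm plus least Lipschitz constant. -/
noncomputable def caNorm (a : ℕ → ℝ) (f : Omega → ℝ) : ℝ := (⨆ x, |f x|) + lipA a f

lemma dA_self (a : ℕ → ℝ) (x : Omega) : dA a x x = 0 := by
  unfold dA; exact dif_pos rfl

lemma dA_pos (p : GoodSeq) {x y : Omega} (hxy : x ≠ y) : 0 < dA p.a x y := by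
  unfold dA; rw [dif_neg hxy]; exact p.pos _

lemma dA_nonneg (p : GoodSeq) (x y : Omega) : 0 ≤ dA p.a x y := by
  unfold dA; split
  · exact le_rfl
  · exact (p.pos _).le

lemma dA_le_a0 (p : GoodSeq) (x y : Omega) : dA p.a x y ≤ p.a 0 := by
  unfold dA; split
  · exact (p.pos 0).le
  · exact p.anti.antitone (Nat.zero_le _)

lemma lipSet_nonempty (p : GoodSeq) {f : Omega → ℝ} (hf : MemCa p.a f) :
    (lipSet p.a f).Nonempty := by
  obtain ⟨K, hK⟩ := hf
  exact ⟨max K 0, le_max_right _ _, fun x y => (hK x y).trans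
    (mul_le_mul_of_nonneg_right (le_max_left _ _) (dA_nonneg p x y))⟩

lemma lipSet_bddBelow (a : ℕ → ℝ) (f : Omega → ℝ) : BddBelow (lipSet a f) :=
  ⟨0, fun _ hK => hK.1⟩

lemma lipA_nonneg (p : GoodSeq) {f : Omega → ℝ} (hf : MemCa p.a f) : 0 ≤ lipA p.a f :=
  le_csInf (lipSet_nonempty p hf) fun _ hK => hK.1

lemma lipA_le (p : GoodSeq) {f : Omega → ℝ} {K : ℝ} (hK : K ∈ lipSet p.a f) :
    lipA p.a f ≤ K := csInf_le (lipSet_bddBelow _ _) hK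

lemma lipA_spec (p : GoodSeq) {f : Omega → ℝ} (hf : MemCa p.a f) (x y : Omega) :
    |f x - f y| ≤ lipA p.a f * dA p.a x y := by
  rcases eq_or_ne x y with rfl | hxy
  · simp [dA_self]
  · have hd : 0 < dA p.a x y := dA_pos p hxy
    have h1 : |f x - f y| / dA p.a x y ≤ lipA p.a f :=
      le_csInf (lipSet_nonempty p hf) (fun K hK => (div_le_iff₀ hd).2 (hK.2 x y))
    calc |f x - f y| = |f x - f y| / dA p.a x y * dA p.a x y := by field_simp
      _ ≤ _ := mul_le_mul_of_nonneg_right h1 hd.le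

lemma bddAbove_abs (p : GoodSeq) {f : Omega → ℝ} (hf : MemCa p.a f) :
    BddAbove (Set.range fun x => |f x|) := by
  refine ⟨|f (fun _ => false)| + lipA p.a f * p.a 0, ?_⟩
  rintro r ⟨x, rfl⟩
  have h1 : |f x| ≤ |f (fun _ => false)| + |f x - f (fun _ => false)| := by
    have := abs_add_le (f (fun _ => false)) (f x - f (fun _ => false))
    simpa using this
  refine h1.trans (add_le_add le_rfl ?_)
  refine (lipA_spec p hf x _).trans ?_
  exact mul_le_mul_of_nonneg_left (dA_le_a0 p _ _) (lipA_nonneg p hf)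

lemma le_caSup (p : GoodSeq) {f : Omega → ℝ} (hf : MemCa p.a f) (x : Omega) :
    |f x| ≤ ⨆ y, |f y| := le_ciSup (bddAbove_abs p hf) x

/-- The Lipschitz functions form a linear subspace of `Ω → ℝ`. -/
noncomputable def caSub (a : ℕ → ℝ) : Submodule ℝ (Omega → ℝ) where
  carrier := {f | MemCa a f}
  add_mem' := by
    rintro f g ⟨K, hK⟩ ⟨L, hL⟩
    refine ⟨K + L, fun x y => ?_⟩
    calc |(f + g) x - (f + g) y| = |(f x - f y) + (g x - g y)| := by
          simp only [Pi.add_apply]; ring_nf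
      _ ≤ |f x - f y| + |g x - g y| := abs_add_le _ _
      _ ≤ K * dA a x y + L * dA a x y := add_le_add (hK x y) (hL x y)
      _ = (K + L) * dA a x y := by ring
  zero_mem' := ⟨0, by simp⟩
  smul_mem' := by
    rintro c f ⟨K, hK⟩
    refine ⟨|c| * K, fun x y => ?_⟩
    calc |(c • f) x - (c • f) y| = |c| * |f x - f y| := by
          simp only [Pi.smul_apply, smul_eq_mul]
          rw [← abs_mul]; ring_nf
      _ ≤ |c| * (K * dA a x y) := mul_le_mul_of_nonneg_left (hK x y) (abs_nonneg c)
      _ = |c| * K * dA a x y := by ring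

/-- The Banach space `C^a(Ω)` of `d_a`-Lipschitz functions. -/
def CaSpace (p : GoodSeq) : Type := ↥(caSub p.a)

noncomputable instance (p : GoodSeq) : AddCommGroup (CaSpace p) :=
  inferInstanceAs (AddCommGroup ↥(caSub p.a))

noncomputable instance (p : GoodSeq) : Module ℝ (CaSpace p) :=
  inferInstanceAs (Module ℝ ↥(caSub p.a))

/-- The underlying function of an element of `C^a(Ω)`. -/
def CaSpace.fn {p : GoodSeq} (F : CaSpace p) : Omega → ℝ := Subtype.val F

lemma CaSpace.memCa {p : GoodSeq} (F : CaSpace p) : MemCa p.a F.fn := Subtype.prop F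

lemma lipA_zero (p : GoodSeq) : lipA p.a 0 = 0 := by
  refine le_antisymm (lipA_le p ⟨le_rfl, fun x y => by simp [dA_nonneg]⟩)
    (lipA_nonneg p ⟨0, by simp⟩)

lemma abs_neg_sub (f : Omega → ℝ) (x y : Omega) : |(-f) x - (-f) y| = |f x - f y| := by
  simp only [Pi.neg_apply]
  rw [show -f x - -f y = -(f x - f y) by ring, abs_neg]

lemma lipSet_neg (a : ℕ → ℝ) (f : Omega → ℝ) : lipSet a (-f) = lipSet a f := by
  ext K
  constructor <;> intro h <;> refine ⟨h.1, fun x y => ?_⟩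
  · have := h.2 x y
    rwa [abs_neg_sub] at this
  · have := h.2 x y
    rw [abs_neg_sub]
    exact this

/-- The Lipschitz norm on `C^a(Ω)` as an `AddGroupNorm`. -/
noncomputable def caAGN (p : GoodSeq) : AddGroupNorm (CaSpace p) where
  toFun F := caNorm p.a F.fn
  map_zero' := by
    show caNorm p.a (0 : CaSpace p).fn = 0
    have h0 : (0 : CaSpace p).fn = (0 : Omega → ℝ) := rfl
    rw [h0]
    unfold caNorm
    rw [lipA_zero]
    simp
  add_le' F G := by
    show caNorm p.a (F + G).fn ≤ caNorm p.a F.fn + caNorm p.a G.fn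
    have hadd : (F + G).fn = F.fn + G.fn := rfl
    unfold caNorm
    rw [hadd]
    have h1 : (⨆ x, |(F.fn + G.fn) x|) ≤ (⨆ x, |F.fn x|) + ⨆ x, |G.fn x| := by
      refine ciSup_le fun x => ?_
      calc |(F.fn + G.fn) x| ≤ |F.fn x| + |G.fn x| := abs_add_le _ _
        _ ≤ _ := add_le_add (le_caSup p F.memCa x) (le_caSup p G.memCa x)
    have h2 : lipA p.a (F.fn + G.fn) ≤ lipA p.a F.fn + lipA p.a G.fn := by
      refine lipA_le p ⟨add_nonneg (lipA_nonneg p F.memCa) (lipA_nonneg p G.memCa),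
        fun x y => ?_⟩
      calc |(F.fn + G.fn) x - (F.fn + G.fn) y|
          = |(F.fn x - F.fn y) + (G.fn x - G.fn y)| := by
            simp only [Pi.add_apply]; ring_nf
        _ ≤ |F.fn x - F.fn y| + |G.fn x - G.fn y| := abs_add_le _ _
        _ ≤ lipA p.a F.fn * dA p.a x y + lipA p.a G.fn * dA p.a x y :=
            add_le_add (lipA_spec p F.memCa x y) (lipA_spec p G.memCa x y)
        _ = (lipA p.a F.fn + lipA p.a G.fn) * dA p.a x y := by ring
    linarith
  neg' F := by
    show caNorm p.a (-F).fn = caNorm p.a F.fn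
    have hneg : (-F).fn = -(F.fn) := rfl
    unfold caNorm
    rw [hneg]
    congr 1
    · exact iSup_congr fun x => by simp
    · unfold lipA; rw [lipSet_neg]
  eq_zero_of_map_eq_zero' F h := by
    have h' : caNorm p.a F.fn = 0 := h
    have hsup0 : 0 ≤ ⨆ x, |F.fn x| :=
      le_trans (abs_nonneg _) (le_caSup p F.memCa (fun _ => false))
    have hlip0 := lipA_nonneg p F.memCa
    unfold caNorm at h'
    have hsup : (⨆ x, |F.fn x|) = 0 := by linarith
    have hz : ∀ x, F.fn x = 0 := by
      intro x
      have := le_caSup p F.memCa x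
      rw [hsup] at this
      exact abs_nonpos_iff.mp this
    exact Subtype.ext (funext hz)

noncomputable instance (p : GoodSeq) : NormedAddCommGroup (CaSpace p) :=
  (caAGN p).toNormedAddCommGroup

noncomputable instance (p : GoodSeq) : MeasurableSpace (CaSpace p) := borel (CaSpace p)

/-- The Haar function `h_ω = (χ_{[ω0]} − χ_{[ω1]})/2` for a finite word `ω`. -/
noncomputable def haar (w : List Bool) (x : Omega) : ℝ :=
  if ∀ i : Fin w.length, x (i : ℕ) = w.get i then
    (if x w.length = false then 1 / 2 else -(1 / 2)) else 0

/-- `b̄_n = max_{|ω|=n} b_ω`. -/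
noncomputable def gaugeMax (b : List Bool → ℝ) (n : ℕ) : ℝ :=
  sSup {r | ∃ w : List Bool, w.length = n ∧ r = b w}

/-!
At a point `x` the only Haar functions that do not vanish are those of the prefixes of `x`, each
of size `1/2`. Hence if `|c_ω| ≤ β_{|ω|}` and `x`, `y` first differ at index `m`, the series
`Σ c_ω h_ω` at `x` and at `y` have the same terms below level `m` and differ by at most
`Σ_{k ≥ m} β_k`. With `β = b̄` the hypothesis `Σ_{k≥n} b̄_k = o(a_n)` makes every element of the
brick `d_a`-Lipschitz, so the brick is the image of the compact box `∏_ω [-b_ω, b_ω]` under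
`c ↦ Σ c_ω h_ω`. This map is continuous on the box: if two coefficient families are `δ`-close on
the finitely many words of length `< N`, their difference is bounded by `δ` below level `N` and by
`2 b̄` from level `N` on, and for `N` large and `δ` small both parts have small tails relative
to `a`.
-/

def prefixWord (x : Omega) (n : ℕ) : List Bool := List.ofFn fun i : Fin n => x i

@[simp] lemma prefixWord_length (x : Omega) (n : ℕ) : (prefixWord x n).length = n :=
  List.length_ofFn

lemma prefixWord_injective (x : Omega) : Function.Injective (prefixWord x) := fun m n h => by
  rw [← prefixWord_length x m, h, prefixWord_length]

lemma prefixWord_congr {x y : Omega} {n : ℕ} (h : ∀ k < n, x k = y k) :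
    prefixWord x n = prefixWord y n :=
  congrArg List.ofFn (funext fun i => h i i.2)

lemma haar_prefixWord (x : Omega) (n : ℕ) :
    haar (prefixWord x n) x = if x n = false then 1 / 2 else -(1 / 2) := by
  rw [haar, if_pos fun ⟨i, _⟩ => by simp [prefixWord], prefixWord_length]

lemma abs_haar_prefixWord (x : Omega) (n : ℕ) : |haar (prefixWord x n) x| = 1 / 2 := by
  rw [haar_prefixWord]
  split <;> norm_num [abs_of_pos]

lemma haar_eq_zero_of_notMem_range {w : List Bool} {x : Omega}
    (h : w ∉ Set.range (prefixWord x)) : haar w x = 0 := by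
  rw [haar, if_neg]
  refine fun hw => h ⟨w.length, List.ext_getElem (by simp) fun i hi _ => ?_⟩
  simpa [prefixWord] using hw ⟨i, by simpa using hi⟩

noncomputable def haarTerm (c : List Bool → ℝ) (x : Omega) (n : ℕ) : ℝ :=
  c (prefixWord x n) * haar (prefixWord x n) x

noncomputable def haarSeries (c : List Bool → ℝ) (x : Omega) : ℝ := ∑' n, haarTerm c x n

lemma haarTerm_congr (c : List Bool → ℝ) {x y : Omega} {n : ℕ} (h : ∀ k ≤ n, x k = y k) :
    haarTerm c x n = haarTerm c y n := by
  rw [haarTerm, haarTerm, haar_prefixWord, haar_prefixWord,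
    prefixWord_congr fun k hk => h k hk.le, h n le_rfl]

lemma abs_haarTerm_le {c : List Bool → ℝ} {β : ℕ → ℝ} (hβ : ∀ w, |c w| ≤ β w.length)
    (x : Omega) (n : ℕ) : |haarTerm c x n| ≤ β n / 2 := by
  have := hβ (prefixWord x n)
  rw [prefixWord_length] at this
  rw [haarTerm, abs_mul, abs_haar_prefixWord]
  linarith

lemma summable_haarTerm {c : List Bool → ℝ} {β : ℕ → ℝ} (hβ : ∀ w, |c w| ≤ β w.length)
    (hβs : Summable β) (x : Omega) : Summable (haarTerm c x) :=
  (hβs.div_const 2).of_norm_bounded (abs_haarTerm_le hβ x)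

lemma hasSum_haarSeries {c : List Bool → ℝ} {β : ℕ → ℝ} (hβ : ∀ w, |c w| ≤ β w.length)
    (hβs : Summable β) (x : Omega) :
    HasSum (fun w => c w * haar w x) (haarSeries c x) := by
  rw [← (prefixWord_injective x).hasSum_iff fun w hw => by
    rw [haar_eq_zero_of_notMem_range hw, mul_zero]]
  exact (summable_haarTerm hβ hβs x).hasSum

lemma haarSeries_sub {c c' : List Bool → ℝ} {β : ℕ → ℝ} (hc : ∀ w, |c w| ≤ β w.length)
    (hc' : ∀ w, |c' w| ≤ β w.length) (hβs : Summable β) (x : Omega) :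
    haarSeries (c' - c) x = haarSeries c' x - haarSeries c x := by
  rw [haarSeries, haarSeries, haarSeries,
    ← (summable_haarTerm hc' hβs x).tsum_sub (summable_haarTerm hc hβs x)]
  exact tsum_congr fun n => sub_mul _ _ _

lemma abs_tsum_le_tsum_nat_add {f β : ℕ → ℝ} (hf : ∀ n, |f n| ≤ β n) (hβs : Summable β)
    {m : ℕ} (hm : ∀ n < m, f n = 0) : |∑' n, f n| ≤ ∑' k, β (m + k) := by
  have hfs : Summable f := hβs.of_norm_bounded hf
  rw [← hfs.sum_add_tsum_nat_add m, Finset.sum_eq_zero fun n hn => hm n (Finset.mem_range.1 hn),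
    zero_add, ← Real.norm_eq_abs]
  have hβm : Summable fun k => β (m + k) :=
    ((summable_nat_add_iff m).2 hβs).congr fun k => by rw [add_comm]
  refine tsum_of_norm_bounded hβm.hasSum fun k => ?_
  rw [add_comm m]
  exact hf _

lemma abs_haarSeries_sub_le {c : List Bool → ℝ} {β : ℕ → ℝ} (hβ : ∀ w, |c w| ≤ β w.length)
    (hβs : Summable β) {x y : Omega} {m : ℕ} (hxy : ∀ k < m, x k = y k) :
    |haarSeries c x - haarSeries c y| ≤ ∑' k, β (m + k) := by
  rw [haarSeries, haarSeries,
    ← (summable_haarTerm hβ hβs x).tsum_sub (summable_haarTerm hβ hβs y)]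
  refine abs_tsum_le_tsum_nat_add (fun n => ?_) hβs fun n hn =>
    sub_eq_zero.2 (haarTerm_congr c fun k hk => hxy k (hk.trans_lt hn))
  linarith [abs_sub (haarTerm c x n) (haarTerm c y n), abs_haarTerm_le hβ x n,
    abs_haarTerm_le hβ y n]

lemma abs_haarSeries_le {c : List Bool → ℝ} {β : ℕ → ℝ} (hβ : ∀ w, |c w| ≤ β w.length)
    (hβs : Summable β) (x : Omega) : |haarSeries c x| ≤ ∑' k, β k := by
  have := abs_tsum_le_tsum_nat_add (fun n => by
    linarith [abs_nonneg (haarTerm c x n), abs_haarTerm_le hβ x n]) hβs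
    (m := 0) fun _ hn => absurd hn (Nat.not_lt_zero _)
  simpa [haarSeries] using this

lemma exists_dA_eq {a : ℕ → ℝ} {x y : Omega} (hxy : x ≠ y) :
    ∃ m, (∀ k < m, x k = y k) ∧ dA a x y = a m := by
  classical
  have hne := Function.ne_iff.mp hxy
  exact ⟨Nat.find hne, fun k hk => not_not.1 (Nat.find_min hne hk), by
    rw [dA, dif_neg hxy]⟩

lemma mem_lipSet_haarSeries {a : ℕ → ℝ} {c : List Bool → ℝ} {β : ℕ → ℝ}
    (hβ : ∀ w, |c w| ≤ β w.length) (hβs : Summable β) {K : ℝ} (hK0 : 0 ≤ K)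
    (hK : ∀ m, ∑' k, β (m + k) ≤ K * a m) : K ∈ lipSet a (haarSeries c) := by
  refine ⟨hK0, fun x y => ?_⟩
  rcases eq_or_ne x y with rfl | hxy
  · simp [dA_self]
  · obtain ⟨m, hxy, hd⟩ := exists_dA_eq (a := a) hxy
    rw [hd]
    exact (abs_haarSeries_sub_le hβ hβs hxy).trans (hK m)

lemma caNorm_haarSeries_le (p : GoodSeq) {c : List Bool → ℝ} {β : ℕ → ℝ}
    (hβ : ∀ w, |c w| ≤ β w.length) (hβs : Summable β) {K : ℝ} (hK0 : 0 ≤ K)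
    (hK : ∀ m, ∑' k, β (m + k) ≤ K * p.a m) : caNorm p.a (haarSeries c) ≤ K * (p.a 0 + 1) := by
  have hsup : ⨆ x, |haarSeries c x| ≤ K * p.a 0 :=
    ciSup_le fun x => (abs_haarSeries_le hβ hβs x).trans (by simpa using hK 0)
  have hlip := lipA_le p (mem_lipSet_haarSeries hβ hβs hK0 hK)
  rw [caNorm]
  linarith

lemma abs_le_gaugeMax {b c : List Bool → ℝ} (hc : ∀ w, |c w| ≤ b w) (w : List Bool) :
    |c w| ≤ gaugeMax b w.length := by
  have hbdd : BddAbove {r | ∃ v : List Bool, v.length = w.length ∧ r = b v} :=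
    ((List.finite_length_eq Bool w.length).image b).bddAbove.mono <| by
      rintro _ ⟨v, hv, rfl⟩
      exact ⟨v, hv, rfl⟩
  exact (hc w).trans (le_csSup hbdd ⟨w, rfl, rfl⟩)

lemma memCa_haarSeries (p : GoodSeq) {b c : List Bool → ℝ} (hbsum : Summable (gaugeMax b))
    (htail : (fun n => ∑' k : ℕ, gaugeMax b (n + k)) =o[atTop] p.a) (hc : ∀ w, |c w| ≤ b w) :
    MemCa p.a (haarSeries c) := by
  obtain ⟨C, hC0, hC⟩ := Asymptotics.bound_of_isBigO_nat_atTop htail.isBigO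
  refine ⟨C, (mem_lipSet_haarSeries (abs_le_gaugeMax hc) hbsum hC0.le fun m => ?_).2⟩
  have := hC (p.pos m).ne'
  rw [Real.norm_eq_abs, Real.norm_eq_abs, abs_of_pos (p.pos m)] at this
  exact (le_abs_self _).trans this

lemma summable_ite_lt {g : ℕ → ℝ} (hg : Summable g) (N : ℕ) (δ : ℝ) :
    Summable fun n => if n < N then δ else g n :=
  (summable_nat_add_iff N).1 <| ((summable_nat_add_iff N).2 hg).congr fun k => by
    rw [if_neg (by omega)]

lemma tsum_ite_lt_eq {g : ℕ → ℝ} (hg : Summable g) (N m : ℕ) (δ : ℝ) :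
    ∑' k, (if m + k < N then δ else g (m + k)) =
      ((N - m : ℕ) : ℝ) * δ + ∑' k, g (max m N + k) := by
  have hf : Summable fun k => if m + k < N then δ else g (m + k) :=
    ((summable_nat_add_iff m).2 (summable_ite_lt hg N δ)).congr fun k => by rw [add_comm]
  rw [← hf.sum_add_tsum_nat_add (N - m), Finset.sum_congr rfl fun k hk =>
    if_pos (by have := Finset.mem_range.1 hk; omega)]
  simp only [Finset.sum_const, Finset.card_range, nsmul_eq_mul]
  congr 1
  refine tsum_congr fun k => ?_
  rw [if_neg (by omega)]
  congr 1
  omega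

lemma tsum_ite_lt_le (p : GoodSeq) {g : ℕ → ℝ} (hg : Summable g) {N : ℕ} {δ η : ℝ}
    (hη : 0 ≤ η) (hδ : 0 ≤ δ) (hNδ : N * δ ≤ η * p.a N)
    (htail : ∀ n ≥ N, ∑' k, g (n + k) ≤ η * p.a n) (m : ℕ) :
    ∑' k, (if m + k < N then δ else g (m + k)) ≤ 2 * η * p.a m := by
  have hsmall : ((N - m : ℕ) : ℝ) * δ ≤ η * p.a m := by
    rcases le_or_gt N m with hm | hm
    · rw [Nat.sub_eq_zero_of_le hm, Nat.cast_zero, zero_mul]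
      exact mul_nonneg hη (p.pos m).le
    · calc ((N - m : ℕ) : ℝ) * δ ≤ N * δ := by gcongr; exact_mod_cast Nat.sub_le N m
        _ ≤ η * p.a N := hNδ
        _ ≤ η * p.a m := by gcongr; exact p.anti.antitone hm.le
  have hlarge : ∑' k, g (max m N + k) ≤ η * p.a m :=
    (htail _ (le_max_right m N)).trans (by gcongr; exact p.anti.antitone (le_max_left m N))
  rw [tsum_ite_lt_eq hg]
  linarith

open Classical in
noncomputable def haarSeriesCa (p : GoodSeq) (c : List Bool → ℝ) : CaSpace p :=
  if h : MemCa p.a (haarSeries c) then ⟨haarSeries c, h⟩ else 0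

lemma haarSeriesCa_fn {p : GoodSeq} {c : List Bool → ℝ} (h : MemCa p.a (haarSeries c)) :
    (haarSeriesCa p c).fn = haarSeries c := by
  rw [show haarSeriesCa p c = ⟨haarSeries c, h⟩ from dif_pos h]
  rfl

def coeffBox (b : List Bool → ℝ) : Set (List Bool → ℝ) :=
  Set.univ.pi fun w => Icc (-b w) (b w)

lemma mem_coeffBox {b c : List Bool → ℝ} : c ∈ coeffBox b ↔ ∀ w, |c w| ≤ b w := by
  simp only [coeffBox, Set.mem_univ_pi, Set.mem_Icc, abs_le]

lemma isCompact_coeffBox (b : List Bool → ℝ) : IsCompact (coeffBox b) :=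
  isCompact_univ_pi fun _ => isCompact_Icc

lemma dist_haarSeriesCa_le (p : GoodSeq) {b c c' : List Bool → ℝ}
    (hbsum : Summable (gaugeMax b)) (hc : ∀ w, |c w| ≤ b w) (hc' : ∀ w, |c' w| ≤ b w)
    (hmem : MemCa p.a (haarSeries c)) (hmem' : MemCa p.a (haarSeries c'))
    {N : ℕ} {δ η : ℝ} (hη : 0 ≤ η) (hδ : 0 ≤ δ) (hNδ : N * δ ≤ 2 * η * p.a N)
    (htail : ∀ n ≥ N, ∑' k, gaugeMax b (n + k) ≤ η * p.a n)
    (hclose : ∀ w : List Bool, w.length < N → |c' w - c w| ≤ δ) :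
    dist (haarSeriesCa p c') (haarSeriesCa p c) ≤ 4 * η * (p.a 0 + 1) := by
  set β : ℕ → ℝ := fun n => if n < N then δ else 2 * gaugeMax b n
  have hβ : ∀ w, |(c' - c) w| ≤ β w.length := fun w => by
    by_cases hw : w.length < N
    · simpa [β, hw] using hclose w hw
    · simp only [β, if_neg hw, Pi.sub_apply]
      linarith [abs_sub (c' w) (c w), abs_le_gaugeMax hc w, abs_le_gaugeMax hc' w]
  have hβtail (m : ℕ) : ∑' k, β (m + k) ≤ 2 * (2 * η) * p.a m :=
    tsum_ite_lt_le p (hbsum.mul_left 2) (by positivity) hδ hNδ (fun n hn => by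
      rw [tsum_mul_left]; linarith [htail n hn]) m
  have hfn : (haarSeriesCa p c' - haarSeriesCa p c).fn = haarSeries (c' - c) := by
    funext x
    rw [haarSeries_sub (abs_le_gaugeMax hc) (abs_le_gaugeMax hc') hbsum x,
      ← haarSeriesCa_fn hmem, ← haarSeriesCa_fn hmem']
    rfl
  rw [dist_eq_norm, show ‖haarSeriesCa p c' - haarSeriesCa p c‖ = caNorm p.a _ from rfl, hfn]
  linarith [caNorm_haarSeries_le p hβ (summable_ite_lt (hbsum.mul_left 2) N δ) (by positivity)
    hβtail]

lemma continuousOn_haarSeriesCa (p : GoodSeq) {b : List Bool → ℝ} (hbsum : Summable (gaugeMax b))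
    (htail : (fun n => ∑' k : ℕ, gaugeMax b (n + k)) =o[atTop] p.a) :
    ContinuousOn (haarSeriesCa p) (coeffBox b) := by
  intro c hc
  rw [mem_coeffBox] at hc
  refine Metric.tendsto_nhds.2 fun ε hε => ?_
  have ha0 := p.pos 0
  set η := ε / (8 * (p.a 0 + 1))
  have hη : 0 < η := by positivity
  obtain ⟨N, hN⟩ := eventually_atTop.1 (htail.bound hη)
  have hT : ∀ n ≥ N, ∑' k, gaugeMax b (n + k) ≤ η * p.a n := fun n hn =>
    (le_abs_self _).trans <| by simpa [abs_of_pos (p.pos n)] using hN n hn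
  have haN := p.pos N
  set δ := 2 * η * p.a N / (N + 1)
  have hδ : 0 < δ := by positivity
  have hNδ : N * δ ≤ 2 * η * p.a N := by
    rw [mul_div_assoc', div_le_iff₀ (by positivity)]
    nlinarith
  have hclose : ∀ᶠ c' in nhdsWithin c (coeffBox b), ∀ w ∈ {w : List Bool | w.length < N},
      dist (c' w) (c w) < δ :=
    (eventually_all_finite (List.finite_length_lt Bool N)).2 fun w _ => nhdsWithin_le_nhds <|
      (continuous_apply w).continuousAt.eventually_mem (Metric.ball_mem_nhds (c w) hδ)
  filter_upwards [hclose, self_mem_nhdsWithin] with c' hc'close hc'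
  rw [mem_coeffBox] at hc'
  calc dist (haarSeriesCa p c') (haarSeriesCa p c) ≤ 4 * η * (p.a 0 + 1) :=
        dist_haarSeriesCa_le p hbsum hc hc' (memCa_haarSeries p hbsum htail hc)
          (memCa_haarSeries p hbsum htail hc') hη.le hδ.le hNδ hT
          fun w hw => (Real.dist_eq _ _ ▸ hc'close w hw).le
    _ < ε := by
        rw [show 4 * η * (p.a 0 + 1) = ε / 2 by simp only [η]; field_simp; ring]
        linarith

lemma hilbertBrick_eq_image (p : GoodSeq) {b : List Bool → ℝ} (hbsum : Summable (gaugeMax b))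
    (htail : (fun n => ∑' k : ℕ, gaugeMax b (n + k)) =o[atTop] p.a) :
    {F : CaSpace p | ∃ c : List Bool → ℝ, (∀ w, |c w| ≤ b w) ∧
      ∀ x, HasSum (fun w : List Bool => c w * haar w x) (F.fn x)} =
      haarSeriesCa p '' coeffBox b := by
  ext F
  constructor
  · rintro ⟨c, hc, hF⟩
    have hfn : F.fn = haarSeries c :=
      funext fun x => (hF x).unique (hasSum_haarSeries (abs_le_gaugeMax hc) hbsum x)
    exact ⟨c, mem_coeffBox.2 hc, Subtype.ext <|
      (haarSeriesCa_fn (memCa_haarSeries p hbsum htail hc)).trans hfn.symm⟩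
  · rintro ⟨c, hc, rfl⟩
    rw [mem_coeffBox] at hc
    refine ⟨c, hc, fun x => ?_⟩
    rw [haarSeriesCa_fn (memCa_haarSeries p hbsum htail hc)]
    exact hasSum_haarSeries (abs_le_gaugeMax hc) hbsum x

theorem hilbert_brick_compact_general (p : GoodSeq) (b : List Bool → ℝ)
    (hbsum : Summable (gaugeMax b))
    (htail : (fun n => ∑' k : ℕ, gaugeMax b (n + k)) =o[atTop] p.a) :
    IsCompact {F : CaSpace p | ∃ c : List Bool → ℝ, (∀ w, |c w| ≤ b w) ∧
      ∀ x, HasSum (fun w : List Bool => c w * haar w x) (F.fn x)} := by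
  rw [hilbertBrick_eq_image p hbsum htail]
  exact (isCompact_coeffBox b).image_of_continuousOn (continuousOn_haarSeriesCa p hbsum htail)

/-- **Compactness of Hilbert bricks.**  Let `a = (a_n)` be a strictly decreasing
sequence of positive reals converging to `0`, and let `b = (b_ω)` be a gauge with
`b̄_n = sup_{|ω|=n} b_ω`.  If `Σ_{k ≥ n} b̄_k = o(a_n)`, then the Hilbert brick `H_b`
is a compact subset of the Banach space `C^a(Ω)`. -/
theorem hilbert_brick_compact (p : GoodSeq) (b : List Bool → ℝ) (hbpos : ∀ w, 0 < b w)
    (hbsum : Summable (gaugeMax b))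
    (htail : (fun n => ∑' k : ℕ, gaugeMax b (n + k)) =o[atTop] p.a) :
    IsCompact {F : CaSpace p | ∃ c : List Bool → ℝ, (∀ w, |c w| ≤ b w) ∧
      ∀ x, HasSum (fun w : List Bool => c w * haar w x) (F.fn x)} :=
  hilbert_brick_compact_general p b hbsum htail
end

section
/- Fix ν ∈ M_σ, n ∈ ℕ and μ ∈ C_n. For each k ≥ n, among all convex combinations ν_k = Σ_{ξ∈C_k} p_k(ξ)·ξ of measures in C_k satisfying π_k(ν_k) = π_k(ν), define u_k as the minimal possible value of Σ_{ξ∈C_k, per(ξ)≥per(μ)} p_k(ξ)·ξ(B_{μ,n}). Then the sequence (u_k)_{k≥n} is monotone nondecreasing. -/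
/-!
Refine a level-`l` decomposition `ν_l = ∑ q_i ξ_i` by splitting each `ξ_i ∈ 𝒞_l` into measures of
`𝒞_k` with period at most `per(ξ_i)`. This gives a level-`k` decomposition of `ν`. Since
`B_{μ,n}` is a union of level-`k` cylinders, `ξ_i(B_{μ,n})` is the weighted sum of the values of
its pieces. A piece of period `≥ per(μ)` can only come from some `ξ_i` of period `≥ per(μ)`, so
every value at level `l` dominates a value at level `k`.

These decompositions exist because the level-`k` marginal of an invariant measure is a
nonnegative circulation on the de Bruijn graph. Such a circulation splits into simple cycles,
each the marginal of a measure of `𝒞_k`. A simple cycle through the support of a periodic `ξ`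
has at most `per(ξ)` vertices.
-/

open Filter Set MeasureTheory
open scoped ENNReal

/-- The cylinder determined by a word of length `n` (as a function `Fin n → Bool`). -/
def cylF {n : ℕ} (w : Fin n → Bool) : Set Omega := {x | ∀ i : Fin n, x i = w i}

/-- The cylinder determined by a finite word (as a list). -/
def cylL (w : List Bool) : Set Omega := {x | ∀ i : Fin w.length, x (i : ℕ) = w.get i}

/-- A shift-invariant Borel probability measure on `Ω`. -/
def InvariantProb (μ : Measure Omega) : Prop :=
  IsProbabilityMeasure μ ∧ ∀ s : Set Omega, MeasurableSet s → μ (shift ⁻¹' s) = μ s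

/-- `μ` is a maximizing measure for `f`. -/
def IsMaxMeasure (f : Omega → ℝ) (μ : Measure Omega) : Prop :=
  InvariantProb μ ∧ ∀ ν : Measure Omega, InvariantProb ν → ∫ x, f x ∂ν ≤ ∫ x, f x ∂μ

/-- The uniform measure on the orbit segment `x, σx, …, σ^{p-1}x`. -/
noncomputable def orbitMeasure (x : Omega) (p : ℕ) : Measure Omega :=
  (p : ℝ≥0∞)⁻¹ • ∑ j ∈ Finset.range p, MeasureTheory.Measure.dirac (shift^[j] x)

/-- A periodic measure: an invariant measure supported on a periodic orbit. -/
def IsPeriodicMeasure (μ : Measure Omega) : Prop :=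
  ∃ (x : Omega) (p : ℕ), 0 < p ∧ shift^[p] x = x ∧ μ = orbitMeasure x p

/-- The period of (the orbit supporting) a periodic measure. -/
noncomputable def perM (μ : Measure Omega) : ℕ :=
  sInf {p | 0 < p ∧ ∃ x, shift^[p] x = x ∧ μ = orbitMeasure x p}

/-- The (topological) support of a measure. -/
def msupp (μ : Measure Omega) : Set Omega :=
  {x | ∀ U : Set Omega, IsOpen U → x ∈ U → 0 < μ U}

/-- `B_{μ,k}`: the union of all cylinders of level `k` meeting the support of `μ`. -/
def Bbasin (μ : Measure Omega) (k : ℕ) : Set Omega :=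
  {x | ∃ y ∈ msupp μ, ∀ i, i < k → x i = y i}

/-- Membership in `𝒞_n`: periodic measures whose `G_n`-itinerary is a cycle, i.e. each
cylinder of level `n-1` contains at most one point of the support. -/
def MemCn (n : ℕ) (μ : Measure Omega) : Prop :=
  IsPeriodicMeasure μ ∧
    ∀ x ∈ msupp μ, ∀ y ∈ msupp μ, (∀ k, k + 1 < n → x k = y k) → x = y

/-- The set of values `Σ_{ξ ∈ 𝒞_k, per(ξ) ≥ per(μ)} p_k(ξ) ξ(B_{μ,n})` over all convex
combinations `ν_k = Σ_{ξ ∈ 𝒞_k} p_k(ξ) ξ` of measures in `𝒞_k` with `π_k(ν_k) = π_k(ν)`. -/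
def ukValues (ν μ : MeasureTheory.Measure Omega) (n k : ℕ) : Set ℝ :=
  {u | ∃ (m : ℕ) (ξ : Fin m → MeasureTheory.Measure Omega) (q : Fin m → ℝ),
    (∀ i, MemCn k (ξ i)) ∧ (∀ i, 0 ≤ q i) ∧ (∑ i, q i = 1) ∧
    (∀ w : Fin k → Bool,
      (∑ i, q i * ((ξ i) (cylF w)).toReal) = (ν (cylF w)).toReal) ∧
    u = ∑ i ∈ Finset.univ.filter (fun i => perM μ ≤ perM (ξ i)),
          q i * ((ξ i) (Bbasin μ n)).toReal}

lemma shift_iterate_apply (x : Omega) (j i : ℕ) : shift^[j] x i = x (i + j) := by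
  induction j generalizing x with
  | zero => rfl
  | succ j ih => exact ih (shift x)

def window (x : Omega) (t m : ℕ) : Fin m → Bool := fun i => x (t + i)

lemma shift_iterate_mem_cylF {m : ℕ} {w : Fin m → Bool} {x : Omega} {t : ℕ} :
    shift^[t] x ∈ cylF w ↔ window x t m = w := by
  simp only [cylF, Set.mem_ofPred_eq, shift_iterate_apply, funext_iff, window, Nat.add_comm]

lemma init_window (x : Omega) (t K : ℕ) : Fin.init (window x t (K + 1)) = window x t K := rfl

lemma tail_window (x : Omega) (t K : ℕ) : Fin.tail (window x t (K + 1)) = window x (t + 1) K := by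
  funext i
  simp only [Fin.tail, window, Fin.val_succ, Nat.add_assoc, Nat.add_comm 1]

lemma measurableSet_cylF {m : ℕ} (w : Fin m → Bool) : MeasurableSet (cylF w) := by
  have : cylF w = ⋂ i : Fin m, (fun x : Omega => x i) ⁻¹' {w i} := by
    ext x; simp [cylF]
  rw [this]
  exact MeasurableSet.iInter fun i => measurable_pi_apply _ (measurableSet_singleton _)

lemma measurable_shift : Measurable shift :=
  measurable_pi_lambda _ fun n => measurable_pi_apply (n + 1)

def wordPoint {m : ℕ} (w : Fin m → Bool) : Omega := fun i => if h : i < m then w ⟨i, h⟩ else false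

lemma wordPoint_mem_cylF {m : ℕ} (w : Fin m → Bool) : wordPoint w ∈ cylF w := fun i => by
  simp [wordPoint]

def IsPrefixDetermined (k : ℕ) (S : Set Omega) : Prop :=
  ∀ x y : Omega, (∀ i < k, x i = y i) → x ∈ S → y ∈ S

lemma isPrefixDetermined_cylF {j k : ℕ} (w : Fin j → Bool) (h : j ≤ k) :
    IsPrefixDetermined k (cylF w) := fun x y hxy hx i => by
  rw [← hxy i (by omega)]; exact hx i

lemma isPrefixDetermined_Bbasin (μ : Measure Omega) {n k : ℕ} (h : n ≤ k) :
    IsPrefixDetermined k (Bbasin μ n) := by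
  rintro x y hxy ⟨z, hz, hxz⟩
  exact ⟨z, hz, fun i hi => (hxy i (by omega)).symm.trans (hxz i hi)⟩

lemma isPrefixDetermined_preimage_shift_cylF {K : ℕ} (v : Fin K → Bool) :
    IsPrefixDetermined (K + 1) (shift ⁻¹' cylF v) := fun x y hxy hx i => by
  show y (i + 1) = v i
  rw [← hxy (i + 1) (by omega)]; exact hx i

open Classical in
lemma IsPrefixDetermined.eq_biUnion {k : ℕ} {S : Set Omega} (hS : IsPrefixDetermined k S) :
    S = ⋃ w ∈ Finset.univ.filter (fun w : Fin k → Bool => wordPoint w ∈ S), cylF w := by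
  ext x
  simp only [Set.mem_iUnion, Finset.mem_filter, Finset.mem_univ, true_and, exists_prop]
  constructor
  · refine fun hx => ⟨fun i => x i, hS x _ (fun i hi => ?_) hx, fun i => rfl⟩
    simp [wordPoint, hi]
  · rintro ⟨w, hw, hx⟩
    exact hS _ x (fun i hi => (wordPoint_mem_cylF w ⟨i, hi⟩).trans (hx ⟨i, hi⟩).symm) hw

open Classical in
lemma IsPrefixDetermined.toReal_measure_eq_sum {k : ℕ} {S : Set Omega}
    (hS : IsPrefixDetermined k S) (ρ : Measure Omega) [IsFiniteMeasure ρ] :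
    (ρ S).toReal =
      ∑ w ∈ Finset.univ.filter (fun w : Fin k → Bool => wordPoint w ∈ S), (ρ (cylF w)).toReal := by
  conv_lhs => rw [hS.eq_biUnion]
  rw [measure_biUnion_finset _ fun w _ => measurableSet_cylF w,
    ENNReal.toReal_sum fun w _ => measure_ne_top ρ _]
  intro w _ w' _ hne
  exact Set.disjoint_left.2 fun x hx hx' => hne (funext fun i => (hx i).symm.trans (hx' i))

lemma card_filter_range_succ {d : ℕ} (P : ℕ → Prop) [DecidablePred P] (h : P d ↔ P 0) :
    ((Finset.range d).filter (fun t => P (t + 1))).card = ((Finset.range d).filter P).card := by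
  have h1 := Finset.sum_range_succ' (fun t => if P t then 1 else 0) d
  have h2 := Finset.sum_range_succ (fun t => if P t then 1 else 0) d
  simp only [if_congr h rfl rfl] at h2
  rw [← Nat.cast_id (Finset.card _), ← Nat.cast_id (Finset.card (Finset.filter P _)),
    ← Finset.sum_boole, ← Finset.sum_boole]
  omega

open Classical in
lemma orbitMeasure_apply (x : Omega) (p : ℕ) {S : Set Omega} (hS : MeasurableSet S) :
    orbitMeasure x p S =
      (p : ℝ≥0∞)⁻¹ * ((Finset.range p).filter (fun j => shift^[j] x ∈ S)).card := by
  simp only [orbitMeasure, Measure.smul_apply, Measure.coe_finsetSum, Finset.sum_apply,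
    Measure.dirac_apply' _ hS, Set.indicator_apply, Pi.one_apply, Finset.sum_boole, smul_eq_mul]

instance (x : Omega) (p : ℕ) [NeZero p] : IsProbabilityMeasure (orbitMeasure x p) := by
  constructor
  rw [orbitMeasure_apply x p MeasurableSet.univ]
  simp [ENNReal.inv_mul_cancel (NeZero.ne (p : ℝ≥0∞)) (ENNReal.natCast_ne_top p)]

lemma orbitMeasure_preimage_shift {x : Omega} {p : ℕ} (hx : shift^[p] x = x) {S : Set Omega}
    (hS : MeasurableSet S) : orbitMeasure x p (shift ⁻¹' S) = orbitMeasure x p S := by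
  rw [orbitMeasure_apply x p (measurable_shift hS), orbitMeasure_apply x p hS]
  classical
  have hsucc : (Finset.range p).filter (fun j => shift^[j] x ∈ shift ⁻¹' S) =
      (Finset.range p).filter (fun j => shift^[j + 1] x ∈ S) :=
    Finset.filter_congr fun j _ => by rw [Set.mem_preimage, Function.iterate_succ_apply']
  rw [hsucc, card_filter_range_succ (fun j => shift^[j] x ∈ S) (by rw [hx]; rfl)]

lemma exists_iterate_mem_of_orbitMeasure_ne_zero {x : Omega} {p : ℕ} {S : Set Omega}
    (hS : MeasurableSet S) (h : orbitMeasure x p S ≠ 0) : ∃ j < p, shift^[j] x ∈ S := by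
  classical
  rw [orbitMeasure_apply x p hS] at h
  obtain ⟨j, hj, hjS⟩ := Finset.filter_nonempty_iff.1
    (Finset.card_ne_zero.1 (Nat.cast_ne_zero.1 (right_ne_zero_of_mul h)))
  exact ⟨j, Finset.mem_range.1 hj, hjS⟩

lemma msupp_orbitMeasure_subset (x : Omega) (p : ℕ) :
    msupp (orbitMeasure x p) ⊆ (fun j => shift^[j] x) '' Set.Iio p := by
  intro z hz
  by_contra hzo
  have hclosed : IsClosed ((fun j => shift^[j] x) '' Set.Iio p) :=
    ((Set.finite_Iio p).image _).isClosed
  obtain ⟨j, hj, hjo⟩ := exists_iterate_mem_of_orbitMeasure_ne_zero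
    hclosed.isOpen_compl.measurableSet (hz _ hclosed.isOpen_compl hzo).ne'
  exact hjo ⟨j, hj, rfl⟩

lemma IsPeriodicMeasure.invariantProb {ξ : Measure Omega} (hξ : IsPeriodicMeasure ξ) :
    InvariantProb ξ := by
  obtain ⟨x, p, hp, hx, rfl⟩ := hξ
  have : NeZero p := ⟨hp.ne'⟩
  exact ⟨inferInstance, fun S hS => orbitMeasure_preimage_shift hx hS⟩

lemma perM_le {ξ : Measure Omega} {x : Omega} {p : ℕ} (hp : 0 < p) (hx : shift^[p] x = x)
    (hξ : ξ = orbitMeasure x p) : perM ξ ≤ p :=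
  Nat.sInf_le ⟨hp, x, hx, hξ⟩

lemma IsPeriodicMeasure.exists_eq_orbitMeasure_perM {ξ : Measure Omega}
    (hξ : IsPeriodicMeasure ξ) : ∃ x, shift^[perM ξ] x = x ∧ ξ = orbitMeasure x (perM ξ) := by
  obtain ⟨x, p, hp, hx, hξx⟩ := hξ
  exact (Nat.sInf_mem (s := {p | 0 < p ∧ ∃ x, shift^[p] x = x ∧ ξ = orbitMeasure x p})
    ⟨p, hp, x, hx, hξx⟩).2

lemma IsPeriodicMeasure.card_cylF_ne_zero_le_perM {ξ : Measure Omega} (hξ : IsPeriodicMeasure ξ)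
    (K : ℕ) : (Finset.univ.filter (fun v : Fin K → Bool => ξ (cylF v) ≠ 0)).card ≤ perM ξ := by
  obtain ⟨x, -, hξx⟩ := hξ.exists_eq_orbitMeasure_perM
  refine (Finset.card_le_card fun v hv => ?_).trans
    (Finset.card_image_le (s := Finset.range (perM ξ)) (f := fun t => window x t K)) |>.trans
    (Finset.card_range _).le
  rw [Finset.mem_filter, hξx] at hv
  obtain ⟨t, ht, hxt⟩ := exists_iterate_mem_of_orbitMeasure_ne_zero (measurableSet_cylF v) hv.2
  exact Finset.mem_image.2 ⟨t, Finset.mem_range.2 ht, shift_iterate_mem_cylF.1 hxt⟩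

def windowCount (y : Omega) (d : ℕ) {m : ℕ} (w : Fin m → Bool) : ℕ :=
  ((Finset.range d).filter (fun t => window y t m = w)).card

lemma toReal_orbitMeasure_cylF (x : Omega) (p : ℕ) {m : ℕ} (w : Fin m → Bool) :
    (orbitMeasure x p (cylF w)).toReal = windowCount x p w / p := by
  classical
  rw [orbitMeasure_apply x p (measurableSet_cylF w), ENNReal.toReal_mul, ENNReal.toReal_inv,
    ENNReal.toReal_natCast, ENNReal.toReal_natCast, inv_mul_eq_div, windowCount]
  congr 3
  exact Finset.filter_congr fun t _ => shift_iterate_mem_cylF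

lemma sum_windowCount (y : Omega) (d m : ℕ) : ∑ w : Fin m → Bool, windowCount y d w = d := by
  simp only [windowCount]
  rw [← (Finset.card_eq_sum_card_fiberwise fun t _ => Finset.mem_univ (window y t m)),
    Finset.card_range]

/-- Flow conservation in the de Bruijn graph whose edges are the words of length `K + 1`, each
going from its prefix to its suffix of length `K`. -/
def IsCirculation {K : ℕ} (f : (Fin (K + 1) → Bool) → ℝ) : Prop :=
  ∀ v : Fin K → Bool, ∑ e ∈ Finset.univ.filter (fun e => Fin.init e = v), f e =
    ∑ e ∈ Finset.univ.filter (fun e => Fin.tail e = v), f e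

lemma isCirculation_windowCount {y : Omega} {d : ℕ} (hy : shift^[d] y = y) (K : ℕ) :
    IsCirculation (fun e : Fin (K + 1) → Bool => (windowCount y d e : ℝ)) := by
  intro v
  simp only [windowCount]
  norm_cast
  rw [Finset.sum_card_fiberwise_eq_card_filter, Finset.sum_card_fiberwise_eq_card_filter]
  simp only [Finset.mem_filter, Finset.mem_univ, true_and, init_window, tail_window]
  refine (card_filter_range_succ (fun t => window y t K = v) ?_).symm
  have hyd : window y d K = window y 0 K := by
    funext i
    simp only [window, ← shift_iterate_apply, hy, Nat.zero_add, Nat.add_comm d]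
  rw [hyd]

/-- The orbit of `y` is a simple cycle of length `d` in the de Bruijn graph on the words of
length `K`. -/
def IsSimpleCycle (K : ℕ) (y : Omega) (d : ℕ) : Prop :=
  0 < d ∧ shift^[d] y = y ∧ Set.InjOn (fun t => window y t K) (Set.Iio d)

lemma IsSimpleCycle.memCn {K : ℕ} {y : Omega} {d : ℕ} (h : IsSimpleCycle K y d) :
    MemCn (K + 1) (orbitMeasure y d) := by
  refine ⟨⟨y, d, h.1, h.2.1, rfl⟩, fun a ha b hb hab => ?_⟩
  obtain ⟨t, ht, rfl⟩ := msupp_orbitMeasure_subset y d ha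
  obtain ⟨s, hs, rfl⟩ := msupp_orbitMeasure_subset y d hb
  suffices window y t K = window y s K by rw [h.2.2 ht hs this]
  funext i
  have := hab i (by omega)
  simp only [shift_iterate_apply] at this
  simpa only [window, Nat.add_comm] using this

lemma IsSimpleCycle.windowCount_le_one {K : ℕ} {y : Omega} {d : ℕ} (h : IsSimpleCycle K y d)
    (e : Fin (K + 1) → Bool) : windowCount y d e ≤ 1 := by
  refine Finset.card_le_one.2 fun t ht s hs => ?_
  simp only [Finset.mem_filter, Finset.mem_range] at ht hs
  exact h.2.2 ht.1 hs.1 (show window y t K = window y s K by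
    rw [← init_window y t, ← init_window y s, ht.2, hs.2])

lemma window_eq_of_chain {K : ℕ} {ε : ℕ → Fin (K + 1) → Bool}
    (hε : ∀ t, Fin.tail (ε t) = Fin.init (ε (t + 1))) (t : ℕ) :
    window (fun i => ε i 0) t (K + 1) = ε t := by
  have key : ∀ r (hr : r < K + 1) t, ε t ⟨r, hr⟩ = ε (t + r) 0 := by
    intro r
    induction r with
    | zero => intro _ t; rfl
    | succ r ih =>
      intro hr t
      have := congrFun (hε t) ⟨r, by omega⟩
      simp only [Fin.tail, Fin.init, Fin.succ_mk, Fin.castSucc_mk] at this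
      rw [this, ih, Nat.add_right_comm, Nat.add_assoc]
  funext i
  exact (key i i.2 t).symm

lemma window_periodize {z : Omega} {a d K : ℕ} (hd : 0 < d)
    (ha : window z (a + d) K = window z a K) (t : ℕ) :
    window (fun i => z (a + i % d)) t (K + 1) = window z (a + t % d) (K + 1) := by
  let ε r := window z (a + r % d) (K + 1)
  have hchain : ∀ r, Fin.tail (ε r) = Fin.init (ε (r + 1)) := by
    intro r
    simp only [ε, tail_window, init_window]
    have hmod : (r % d + 1) % d = (r + 1) % d := (Nat.mod_modEq r d).add_right 1
    rcases Nat.lt_or_ge (r % d + 1) d with hlt | hge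
    · rw [← hmod, Nat.mod_eq_of_lt hlt, Nat.add_assoc]
    · have heq : r % d + 1 = d := le_antisymm (Nat.mod_lt r hd) hge
      rw [← hmod, heq, Nat.mod_self, Nat.add_assoc, heq, ha, Nat.add_zero]
  exact window_eq_of_chain hchain t

section Circulation

variable {K : ℕ} {f : (Fin (K + 1) → Bool) → ℝ}

lemma IsCirculation.exists_succ_pos (hf0 : ∀ e, 0 ≤ f e) (hf : IsCirculation f)
    {e : Fin (K + 1) → Bool} (he : 0 < f e) : ∃ e', Fin.init e' = Fin.tail e ∧ 0 < f e' := by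
  by_contra! h
  have hout : ∑ e' ∈ Finset.univ.filter (fun e' => Fin.init e' = Fin.tail e), f e' ≤ 0 :=
    Finset.sum_nonpos fun e' he' => h e' (Finset.mem_filter.1 he').2
  have hin : f e ≤ ∑ e' ∈ Finset.univ.filter (fun e' => Fin.tail e' = Fin.tail e), f e' :=
    Finset.single_le_sum (fun e' _ => hf0 e') (by simp)
  linarith [hf (Fin.tail e)]

lemma IsCirculation.exists_forall_window_pos (hf0 : ∀ e, 0 ≤ f e) (hf : IsCirculation f)
    {e₀ : Fin (K + 1) → Bool} (he₀ : 0 < f e₀) : ∃ z : Omega, ∀ t, 0 < f (window z t (K + 1)) := by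
  choose! next hnext using fun e (he : 0 < f e) => hf.exists_succ_pos hf0 he
  have hpos : ∀ t, 0 < f (next^[t] e₀) := by
    intro t
    induction t with
    | zero => exact he₀
    | succ t ih => rw [Function.iterate_succ_apply']; exact (hnext _ ih).2
  have hchain : ∀ t, Fin.tail (next^[t] e₀) = Fin.init (next^[t + 1] e₀) := fun t => by
    rw [Function.iterate_succ_apply', (hnext _ (hpos t)).1]
  exact ⟨_, fun t => by rw [window_eq_of_chain hchain]; exact hpos t⟩

/-- Walk along positive edges until a vertex repeats; the shortest gap between two equal vertices
on the walk closes a simple cycle. -/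
lemma IsCirculation.exists_isSimpleCycle (hf0 : ∀ e, 0 ≤ f e) (hf : IsCirculation f)
    {e₀ : Fin (K + 1) → Bool} (he₀ : 0 < f e₀) :
    ∃ y d, IsSimpleCycle K y d ∧ ∀ t < d, 0 < f (window y t (K + 1)) := by
  classical
  obtain ⟨z, hz⟩ := hf.exists_forall_window_pos hf0 he₀
  have hex : ∃ d, 0 < d ∧ ∃ a, window z (a + d) K = window z a K := by
    obtain ⟨a, b, hab, heq⟩ := Finite.exists_ne_map_eq_of_infinite (fun t => window z t K)
    rcases hab.lt_or_gt with h | h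
    · exact ⟨b - a, by omega, a, by rw [Nat.add_sub_cancel' h.le]; exact heq.symm⟩
    · exact ⟨a - b, by omega, b, by rw [Nat.add_sub_cancel' h.le]; exact heq⟩
  obtain ⟨hd, a, ha⟩ := Nat.find_spec hex
  set d := Nat.find hex
  have hy := window_periodize hd ha
  have hyK : ∀ t < d, window (fun i => z (a + i % d)) t K = window z (a + t) K := fun t ht => by
    rw [← init_window, hy, Nat.mod_eq_of_lt ht, init_window]
  have hgap : ∀ t s, t < s → s < d → window z (a + t) K ≠ window z (a + s) K := by
    intro t s hts hs heq
    have := Nat.find_min' hex (m := s - t) ⟨by omega, a + t, by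
      rw [Nat.add_assoc, Nat.add_sub_cancel' hts.le]; exact heq.symm⟩
    omega
  refine ⟨fun i => z (a + i % d), d, ⟨hd, ?_, fun t ht s hs hts => ?_⟩, fun t _ => ?_⟩
  · funext i
    simp only [shift_iterate_apply, Nat.add_mod_right]
  · have heq := (hyK t ht).symm.trans (hts.trans (hyK s hs))
    rcases lt_trichotomy t s with h | h | h
    · exact absurd heq (hgap t s h hs)
    · exact h
    · exact absurd heq.symm (hgap s t h ht)
  · rw [hy]; exact hz _

/-- Subtracting the least weight along a simple cycle keeps `f` nonnegative and kills one edge. -/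
lemma IsCirculation.exists_isSimpleCycle_sub (hf0 : ∀ e, 0 ≤ f e) (hf : IsCirculation f)
    {e₀ : Fin (K + 1) → Bool} (he₀ : 0 < f e₀) :
    ∃ y d δ, IsSimpleCycle K y d ∧ 0 < δ ∧ (∀ e, δ * windowCount y d e ≤ f e) ∧
      ∃ e, f e ≠ 0 ∧ δ * windowCount y d e = f e := by
  obtain ⟨y, d, hcyc, hpos⟩ := hf.exists_isSimpleCycle hf0 he₀
  obtain ⟨t₀, ht₀, hmin⟩ := Finset.exists_min_image (Finset.range d)
    (fun t => f (window y t (K + 1))) ⟨0, Finset.mem_range.2 hcyc.1⟩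
  have ht₀d := Finset.mem_range.1 ht₀
  refine ⟨y, d, _, hcyc, hpos t₀ ht₀d, fun e => ?_, _, (hpos t₀ ht₀d).ne', ?_⟩
  · rcases Nat.le_one_iff_eq_zero_or_eq_one.1 (hcyc.windowCount_le_one e) with h | h
    · simp [h, hf0 e]
    · obtain ⟨t, ht, rfl⟩ := Finset.filter_nonempty_iff.1 (Finset.card_pos.1 (h ▸ one_pos))
      simpa [h] using hmin t ht
  · have : windowCount y d (window y t₀ (K + 1)) = 1 :=
      le_antisymm (hcyc.windowCount_le_one _)
        (Finset.card_pos.2 ⟨t₀, Finset.mem_filter.2 ⟨ht₀, rfl⟩⟩)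
    simp [this]

lemma IsCirculation.exists_cycle_decomposition (hf0 : ∀ e, 0 ≤ f e) (hf : IsCirculation f) :
    ∃ (m : ℕ) (y : Fin m → Omega) (d : Fin m → ℕ) (δ : Fin m → ℝ),
      (∀ j, IsSimpleCycle K (y j) (d j)) ∧ (∀ j, 0 < δ j) ∧
      ∀ e, f e = ∑ j, δ j * windowCount (y j) (d j) e := by
  classical
  induction hN : (Finset.univ.filter (fun e => f e ≠ 0)).card using Nat.strong_induction_on
    generalizing f with
  | _ N ih =>
    by_cases hzero : ∀ e, f e = 0
    · exact ⟨0, Fin.elim0, Fin.elim0, Fin.elim0, fun j => j.elim0, fun j => j.elim0,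
        by simp [hzero]⟩
    obtain ⟨e₀, he₀⟩ := not_forall.1 hzero
    obtain ⟨y₀, d₀, δ₀, hcyc, hδ₀, hle, e₁, he₁, hkill⟩ :=
      hf.exists_isSimpleCycle_sub hf0 ((hf0 e₀).lt_of_ne (Ne.symm he₀))
    set g := fun e => f e - δ₀ * windowCount y₀ d₀ e with hg
    have hg0 : ∀ e, 0 ≤ g e := fun e => sub_nonneg.2 (hle e)
    have hgcirc : IsCirculation g := fun v => by
      simp only [hg, Finset.sum_sub_distrib, ← Finset.mul_sum, hf v,
        isCirculation_windowCount hcyc.2.1 K v]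
    have hsupp : Finset.univ.filter (fun e => g e ≠ 0) ⊂ Finset.univ.filter (fun e => f e ≠ 0) := by
      refine (Finset.ssubset_iff_of_subset fun e he => ?_).2
        ⟨e₁, by simp [he₁], by simp [hg, hkill]⟩
      simp only [Finset.mem_filter, Finset.mem_univ, true_and] at he ⊢
      intro hfe
      have hnonneg : 0 ≤ δ₀ * windowCount y₀ d₀ e := by positivity
      exact he (by simp only [hg]; linarith [hle e])
    obtain ⟨m, y, d, δ, hcycs, hδ, hgsum⟩ :=
      ih _ (hN ▸ Finset.card_lt_card hsupp) hg0 hgcirc rfl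
    refine ⟨m + 1, Fin.cons y₀ y, Fin.cons d₀ d, Fin.cons δ₀ δ, Fin.cases hcyc hcycs,
      Fin.cases hδ₀ hδ, fun e => ?_⟩
    rw [Fin.sum_univ_succ]
    simp only [Fin.cons_zero, Fin.cons_succ, ← hgsum, hg]
    ring

end Circulation

/-- In the paper's notation, `ν_k = ∑ i, q i • ξ i` with `ξ i ∈ 𝒞_k` and `π_k(ν_k) = π_k(ρ)`. -/
structure IsCDecomposition (k : ℕ) (ρ : Measure Omega) {ι : Type*} [Fintype ι]
    (ξ : ι → Measure Omega) (q : ι → ℝ) : Prop where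
  memCn : ∀ i, MemCn k (ξ i)
  nonneg : ∀ i, 0 ≤ q i
  sum_eq_one : ∑ i, q i = 1
  sum_cylF : ∀ w : Fin k → Bool, ∑ i, q i * (ξ i (cylF w)).toReal = (ρ (cylF w)).toReal

namespace IsCDecomposition

variable {k : ℕ} {ρ : Measure Omega} {ι : Type*} [Fintype ι] {ξ : ι → Measure Omega} {q : ι → ℝ}

lemma toReal_sum_eq (h : IsCDecomposition k ρ ξ q) [IsFiniteMeasure ρ] {S : Set Omega}
    (hS : IsPrefixDetermined k S) : ∑ i, q i * (ξ i S).toReal = (ρ S).toReal := by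
  have := fun i => (h.memCn i).1.invariantProb.1
  simp only [hS.toReal_measure_eq_sum, Finset.mul_sum]
  rw [Finset.sum_comm]
  exact Finset.sum_congr rfl fun w _ => h.sum_cylF w

lemma sigma {l : ℕ} (hkl : k ≤ l) [IsFiniteMeasure ρ] (h : IsCDecomposition l ρ ξ q)
    {κ : ι → Type*} [∀ i, Fintype (κ i)] {ζ : ∀ i, κ i → Measure Omega} {r : ∀ i, κ i → ℝ}
    (hζ : ∀ i, IsCDecomposition k (ξ i) (ζ i) (r i)) :
    IsCDecomposition k ρ (fun p : Σ i, κ i => ζ p.1 p.2) (fun p => q p.1 * r p.1 p.2) where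
  memCn p := (hζ p.1).memCn p.2
  nonneg p := mul_nonneg (h.nonneg p.1) ((hζ p.1).nonneg p.2)
  sum_eq_one := by
    rw [← Finset.univ_sigma_univ, Finset.sum_sigma]
    simp only [← Finset.mul_sum, (hζ _).sum_eq_one, mul_one, h.sum_eq_one]
  sum_cylF w := by
    have := fun i => (h.memCn i).1.invariantProb.1
    rw [← Finset.univ_sigma_univ, Finset.sum_sigma,
      ← h.toReal_sum_eq (isPrefixDetermined_cylF w hkl)]
    refine Finset.sum_congr rfl fun i _ => ?_
    simp only [← (hζ i).sum_cylF w, Finset.mul_sum, mul_assoc]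

lemma comp_equiv (h : IsCDecomposition k ρ ξ q) {ι' : Type*} [Fintype ι'] (e : ι' ≃ ι) :
    IsCDecomposition k ρ (ξ ∘ e) (q ∘ e) where
  memCn i := h.memCn (e i)
  nonneg i := h.nonneg (e i)
  sum_eq_one := by rw [← h.sum_eq_one]; exact e.sum_comp q
  sum_cylF w := by rw [← h.sum_cylF w]; exact e.sum_comp fun i => q i * (ξ i (cylF w)).toReal

end IsCDecomposition

lemma wordPoint_mem_cylF_iff_init {K : ℕ} (e : Fin (K + 1) → Bool) (v : Fin K → Bool) :
    wordPoint e ∈ cylF v ↔ Fin.init e = v := by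
  simp only [cylF, wordPoint, Set.mem_ofPred_eq, funext_iff, Fin.init]
  exact forall_congr' fun i => by rw [dif_pos (by omega)]; rfl

lemma wordPoint_mem_preimage_shift_cylF_iff_tail {K : ℕ} (e : Fin (K + 1) → Bool)
    (v : Fin K → Bool) : wordPoint e ∈ shift ⁻¹' cylF v ↔ Fin.tail e = v := by
  simp only [cylF, shift, wordPoint, Set.mem_preimage, Set.mem_ofPred_eq, funext_iff, Fin.tail]
  exact forall_congr' fun i => by rw [dif_pos (by omega)]; rfl

lemma InvariantProb.isCirculation {ρ : Measure Omega} (hρ : InvariantProb ρ) (K : ℕ) :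
    IsCirculation fun e : Fin (K + 1) → Bool => (ρ (cylF e)).toReal := by
  have := hρ.1
  intro v
  have hinit := (isPrefixDetermined_cylF v K.le_succ).toReal_measure_eq_sum ρ
  have htail := (isPrefixDetermined_preimage_shift_cylF v).toReal_measure_eq_sum ρ
  rw [hρ.2 _ (measurableSet_cylF v), hinit] at htail
  simp only [wordPoint_mem_cylF_iff_init, wordPoint_mem_preimage_shift_cylF_iff_tail] at htail
  convert htail

lemma IsSimpleCycle.le_card_cylF_ne_zero {K : ℕ} {y : Omega} {d : ℕ} (h : IsSimpleCycle K y d)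
    {ρ : Measure Omega} (hpos : ∀ t < d, 0 < (ρ (cylF (window y t (K + 1)))).toReal) :
    d ≤ (Finset.univ.filter (fun v : Fin K → Bool => ρ (cylF v) ≠ 0)).card := by
  have hmaps : ∀ t < d, ρ (cylF (window y t K)) ≠ 0 := fun t ht =>
    ((ENNReal.toReal_pos_iff.1 (hpos t ht)).1.trans_le
      (measure_mono fun x hx i => hx (Fin.castSucc i))).ne'
  simpa using Finset.card_le_card_of_injOn (s := Finset.range d) (fun t => window y t K)
    (fun t ht => by simpa using hmaps t (by simpa using ht)) (by simpa using h.2.2)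

lemma InvariantProb.exists_isCDecomposition_succ {ρ : Measure Omega} (hρ : InvariantProb ρ)
    (K : ℕ) : ∃ (m : ℕ) (ζ : Fin m → Measure Omega) (r : Fin m → ℝ),
      IsCDecomposition (K + 1) ρ ζ r ∧
        ∀ j, perM (ζ j) ≤ (Finset.univ.filter (fun v : Fin K → Bool => ρ (cylF v) ≠ 0)).card := by
  have := hρ.1
  obtain ⟨m, y, d, δ, hcyc, hδ, hsum⟩ :=
    (hρ.isCirculation K).exists_cycle_decomposition fun _ => ENNReal.toReal_nonneg
  have hd : ∀ j, (d j : ℝ) ≠ 0 := fun j => Nat.cast_ne_zero.2 (hcyc j).1.ne'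
  refine ⟨m, fun j => orbitMeasure (y j) (d j), fun j => δ j * d j,
    ⟨fun j => (hcyc j).memCn, fun j => by have := hδ j; positivity, ?_, fun e => ?_⟩, fun j => ?_⟩
  · have htot := (show IsPrefixDetermined (K + 1) Set.univ from
      fun _ _ _ _ => trivial).toReal_measure_eq_sum ρ
    simp only [measure_univ, ENNReal.toReal_one, Set.mem_univ, Finset.filter_true, hsum] at htot
    rw [htot, Finset.sum_comm]
    refine Finset.sum_congr rfl fun j _ => ?_
    rw [← Finset.mul_sum, ← Nat.cast_sum, sum_windowCount]
  · simp only [toReal_orbitMeasure_cylF, hsum e]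
    exact Finset.sum_congr rfl fun j _ => by field_simp [hd j]
  · refine (perM_le (hcyc j).1 (hcyc j).2.1 rfl).trans
      ((hcyc j).le_card_cylF_ne_zero fun t ht => ?_)
    have hcount : 1 ≤ windowCount (y j) (d j) (window (y j) t (K + 1)) :=
      Finset.card_pos.2 ⟨t, Finset.mem_filter.2 ⟨Finset.mem_range.2 ht, rfl⟩⟩
    rw [hsum]
    refine (hδ j).trans_le <| le_trans ?_ (Finset.single_le_sum (f := fun j' =>
      δ j' * windowCount (y j') (d j') (window (y j) t (K + 1)))
      (fun j' _ => by have := hδ j'; positivity) (Finset.mem_univ j))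
    exact le_mul_of_one_le_right (hδ j).le (by exact_mod_cast hcount)

/-- Since `𝒞_0 = 𝒞_1`, a level-`1` decomposition is also one at level `0`; this is why the bound
is stated with the truncated `k - 1`. -/
lemma InvariantProb.exists_isCDecomposition {ρ : Measure Omega} (hρ : InvariantProb ρ) (k : ℕ) :
    ∃ (m : ℕ) (ζ : Fin m → Measure Omega) (r : Fin m → ℝ), IsCDecomposition k ρ ζ r ∧
      ∀ j, perM (ζ j) ≤
        (Finset.univ.filter (fun v : Fin (k - 1) → Bool => ρ (cylF v) ≠ 0)).card := by
  cases k with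
  | succ K => exact hρ.exists_isCDecomposition_succ K
  | zero =>
    have := hρ.1
    obtain ⟨m, ζ, r, h, hper⟩ := hρ.exists_isCDecomposition_succ 0
    refine ⟨m, ζ, r, ⟨fun j => ⟨(h.memCn j).1, fun x hx y hy _ =>
      (h.memCn j).2 x hx y hy fun i hi => by omega⟩, h.nonneg, h.sum_eq_one,
      fun w => h.toReal_sum_eq (isPrefixDetermined_cylF w zero_le_one)⟩, hper⟩

lemma IsPeriodicMeasure.exists_isCDecomposition {ξ : Measure Omega} (hξ : IsPeriodicMeasure ξ)
    (k : ℕ) : ∃ (m : ℕ) (ζ : Fin m → Measure Omega) (r : Fin m → ℝ),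
      IsCDecomposition k ξ ζ r ∧ ∀ j, perM (ζ j) ≤ perM ξ := by
  obtain ⟨m, ζ, r, h, hper⟩ := hξ.invariantProb.exists_isCDecomposition k
  exact ⟨m, ζ, r, h, fun j => (hper j).trans (hξ.card_cylF_ne_zero_le_perM _)⟩

noncomputable def ukValue (μ : Measure Omega) (n : ℕ) {ι : Type*} [Fintype ι]
    (ξ : ι → Measure Omega) (q : ι → ℝ) : ℝ :=
  ∑ i ∈ Finset.univ.filter (fun i => perM μ ≤ perM (ξ i)), q i * ((ξ i) (Bbasin μ n)).toReal

lemma ukValue_comp_equiv (μ : Measure Omega) (n : ℕ) {ι ι' : Type*} [Fintype ι] [Fintype ι']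
    (ξ : ι → Measure Omega) (q : ι → ℝ) (e : ι' ≃ ι) :
    ukValue μ n (ξ ∘ e) (q ∘ e) = ukValue μ n ξ q := by
  simp only [ukValue, Finset.sum_filter]
  exact e.sum_comp fun i => if perM μ ≤ perM (ξ i) then q i * (ξ i (Bbasin μ n)).toReal else 0

lemma IsCDecomposition.ukValue_mem {ν μ : Measure Omega} {n k : ℕ} {ι : Type*} [Fintype ι]
    {ξ : ι → Measure Omega} {q : ι → ℝ} (h : IsCDecomposition k ν ξ q) :
    ukValue μ n ξ q ∈ ukValues ν μ n k := by
  have h' := h.comp_equiv (Fintype.equivFin ι).symm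
  exact ⟨_, _, _, h'.memCn, h'.nonneg, h'.sum_eq_one, h'.sum_cylF,
    (ukValue_comp_equiv μ n ξ q _).symm⟩

/-- Refining each `ξ i ∈ 𝒞_l` into measures of `𝒞_k` of no larger period can only lose terms
of period `≥ per(μ)`. -/
lemma ukValue_sigma_le (μ : Measure Omega) {n k : ℕ} (hnk : n ≤ k) {ι : Type*} [Fintype ι]
    {ξ : ι → Measure Omega} {q : ι → ℝ} (hq : ∀ i, 0 ≤ q i) [∀ i, IsFiniteMeasure (ξ i)]
    {κ : ι → Type*} [∀ i, Fintype (κ i)] {ζ : ∀ i, κ i → Measure Omega} {r : ∀ i, κ i → ℝ}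
    (hζ : ∀ i, IsCDecomposition k (ξ i) (ζ i) (r i)) (hper : ∀ i j, perM (ζ i j) ≤ perM (ξ i)) :
    ukValue μ n (fun p : Σ i, κ i => ζ p.1 p.2) (fun p => q p.1 * r p.1 p.2) ≤
      ukValue μ n ξ q := by
  simp only [ukValue, Finset.sum_filter]
  rw [← Finset.univ_sigma_univ, Finset.sum_sigma]
  refine Finset.sum_le_sum fun i _ => ?_
  split_ifs with hi
  · rw [← (hζ i).toReal_sum_eq (isPrefixDetermined_Bbasin μ hnk), Finset.mul_sum]
    refine Finset.sum_le_sum fun j _ => ?_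
    split_ifs
    · rw [mul_assoc]
    · exact mul_nonneg (hq i) (mul_nonneg ((hζ i).nonneg j) ENNReal.toReal_nonneg)
  · exact (Finset.sum_eq_zero fun j _ => if_neg fun hj => hi (hj.trans (hper i j))).le

lemma exists_le_of_mem_ukValues {ν μ : Measure Omega} [IsFiniteMeasure ν] {n k l : ℕ}
    (hnk : n ≤ k) (hkl : k ≤ l) {b : ℝ} (hb : b ∈ ukValues ν μ n l) :
    ∃ a ∈ ukValues ν μ n k, a ≤ b := by
  obtain ⟨m, ξ, q, hC, hq, hq1, hcyl, rfl⟩ := hb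
  have h : IsCDecomposition l ν ξ q := ⟨hC, hq, hq1, hcyl⟩
  have := fun i => (hC i).1.invariantProb.1
  choose M ζ r hζ hper using fun i => (hC i).1.exists_isCDecomposition k
  exact ⟨_, (h.sigma hkl hζ).ukValue_mem, ukValue_sigma_le μ hnk hq hζ hper⟩

lemma ukValues_nonempty {ν : Measure Omega} (hν : InvariantProb ν) (μ : Measure Omega)
    (n k : ℕ) : (ukValues ν μ n k).Nonempty := by
  obtain ⟨m, ζ, r, h, -⟩ := hν.exists_isCDecomposition k
  exact ⟨_, h.ukValue_mem⟩

lemma bddBelow_ukValues (ν μ : Measure Omega) (n k : ℕ) : BddBelow (ukValues ν μ n k) := by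
  refine ⟨0, ?_⟩
  rintro _ ⟨m, ξ, q, -, hq, -, -, rfl⟩
  exact Finset.sum_nonneg fun i _ => mul_nonneg (hq i) ENNReal.toReal_nonneg

theorem uk_monotone_general (ν : MeasureTheory.Measure Omega) (hν : InvariantProb ν) (n : ℕ)
    (μ : MeasureTheory.Measure Omega) :
    ∀ k l, n ≤ k → k ≤ l → sInf (ukValues ν μ n k) ≤ sInf (ukValues ν μ n l) := by
  intro k l hnk hkl
  have := hν.1
  refine le_csInf (ukValues_nonempty hν μ n l) fun b hb => ?_
  obtain ⟨a, ha, hab⟩ := exists_le_of_mem_ukValues hnk hkl hb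
  exact (csInf_le (bddBelow_ukValues ν μ n k) ha).trans hab

/-- **Monotonicity of `(u_k)`.**  Fix an invariant probability measure `ν`, `n ∈ ℕ` and
`μ ∈ 𝒞_n`.  For `k ≥ n` let `u_k` be the minimal value of
`Σ_{ξ ∈ 𝒞_k, per(ξ) ≥ per(μ)} p_k(ξ) ξ(B_{μ,n})` over all convex combinations
`ν_k = Σ_{ξ ∈ 𝒞_k} p_k(ξ) ξ` with `π_k(ν_k) = π_k(ν)`.  Then `(u_k)_{k ≥ n}` is
monotone nondecreasing. -/
theorem uk_monotone (ν : MeasureTheory.Measure Omega) (hν : InvariantProb ν) (n : ℕ)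
    (μ : MeasureTheory.Measure Omega) (hμ : MemCn n μ) :
    ∀ k l, n ≤ k → k ≤ l → sInf (ukValues ν μ n k) ≤ sInf (ukValues ν μ n l) :=
  uk_monotone_general ν hν n μ
end
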